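/- arXiv:1202.2919 — 2 statements merged into one kernel-verified Lean document; each statement's English description precedes it below -/
import Mathlib

section
/- For a traversable functor (T, δ), the unitarity law (δ^Id = id_T) is equivalent to the purity law: for every applicative functor F, δ^F ∘ T(η^F) = η^F_T, i.e., traversing with pure elements yields pure of the original structure. -/
/-- An applicative functor on `Type` presented as a pointed lax monoidal endofunctor. -/
structure LaxApp (F : Type → Type) : Type 1 where
  map : ∀ {α β : Type}, (α → β) → F α → F β
  η : ∀ {α : Type}, α → F α
  μ : ∀ {α β : Type}, F α → F β → F (α × β)
  map_id : ∀ {α : Type} (x : F α), map id x = x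
  map_comp : ∀ {α β γ : Type} (g : β → γ) (f : α → β) (x : F α),
    map (g ∘ f) x = map g (map f x)
  η_natural : ∀ {α β : Type} (f : α → β) (x : α), map f (η x) = η (f x)
  μ_natural : ∀ {α β γ δ : Type} (f : α → γ) (g : β → δ) (x : F α) (y : F β),
    map (Prod.map f g) (μ x y) = μ (map f x) (map g y)
  μ_assoc : ∀ {α β γ : Type} (x : F α) (y : F β) (z : F γ),
    map (fun p => (p.1.1, (p.1.2, p.2))) (μ (μ x y) z) = μ x (μ y z)
  μ_left_unit : ∀ {α : Type} (x : F α), map Prod.snd (μ (η PUnit.unit) x) = x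
  μ_right_unit : ∀ {α : Type} (x : F α), map Prod.fst (μ x (η PUnit.unit)) = x
  η_mult : ∀ {α β : Type} (x : α) (y : β), μ (η x) (η y) = η (x, y)

/-- The identity applicative functor. -/
def idApp : LaxApp (fun α => α) where
  map f x := f x
  η x := x
  μ x y := (x, y)
  map_id _ := rfl
  map_comp _ _ _ := rfl
  η_natural _ _ := rfl
  μ_natural _ _ _ _ := rfl
  μ_assoc _ _ _ := rfl
  μ_left_unit _ := rfl
  μ_right_unit _ := rfl
  η_mult _ _ := rfl

/-- Composition of applicative functors is applicative. -/
def compApp {F G : Type → Type} (LF : LaxApp F) (LG : LaxApp G) :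
    LaxApp (fun α => F (G α)) where
  map f x := LF.map (LG.map f) x
  η x := LF.η (LG.η x)
  μ x y := LF.map (fun p => LG.μ p.1 p.2) (LF.μ x y)
  map_id {α} x := by
    show LF.map (LG.map id) x = x
    have h : (LG.map (id : α → α) : G α → G α) = id := funext fun y => LG.map_id y
    rw [h, LF.map_id]
  map_comp {α β γ} g f x := by
    show LF.map (LG.map (g ∘ f)) x = LF.map (LG.map g) (LF.map (LG.map f) x)
    have h : (LG.map (g ∘ f) : G α → G γ) = LG.map g ∘ LG.map f :=
      funext fun y => LG.map_comp g f y
    rw [h, LF.map_comp]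
  η_natural {α β} f x := by
    show LF.map (LG.map f) (LF.η (LG.η x)) = LF.η (LG.η (f x))
    rw [LF.η_natural, LG.η_natural]
  μ_natural {α β γ δ} f g x y := by
    show LF.map (LG.map (Prod.map f g)) (LF.map (fun p => LG.μ p.1 p.2) (LF.μ x y))
      = LF.map (fun p => LG.μ p.1 p.2) (LF.μ (LF.map (LG.map f) x) (LF.map (LG.map g) y))
    rw [← LF.μ_natural, ← LF.map_comp, ← LF.map_comp]
    congr 1
    funext p
    simp only [Function.comp, Prod.map]
    exact LG.μ_natural f g p.1 p.2
  μ_assoc {α β γ} x y z := by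
    show LF.map (LG.map (fun p => (p.1.1, (p.1.2, p.2))))
        (LF.map (fun p => LG.μ p.1 p.2)
          (LF.μ (LF.map (fun p => LG.μ p.1 p.2) (LF.μ x y)) z))
      = LF.map (fun p => LG.μ p.1 p.2)
          (LF.μ x (LF.map (fun p => LG.μ p.1 p.2) (LF.μ y z)))
    have h1 : LF.μ (LF.map (fun p => LG.μ p.1 p.2) (LF.μ x y)) z
        = LF.map (Prod.map (fun p => LG.μ p.1 p.2) id) (LF.μ (LF.μ x y) z) := by
      rw [LF.μ_natural, LF.map_id]
    have h2 : LF.μ x (LF.map (fun p => LG.μ p.1 p.2) (LF.μ y z))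
        = LF.map (Prod.map id (fun p => LG.μ p.1 p.2)) (LF.μ x (LF.μ y z)) := by
      rw [LF.μ_natural, LF.map_id]
    rw [h1, h2, ← LF.μ_assoc, ← LF.map_comp, ← LF.map_comp, ← LF.map_comp, ← LF.map_comp]
    congr 1
    funext p
    obtain ⟨⟨u, v⟩, w⟩ := p
    simp only [Function.comp, Prod.map, id]
    exact LG.μ_assoc u v w
  μ_left_unit {α} x := by
    show LF.map (LG.map Prod.snd)
        (LF.map (fun p => LG.μ p.1 p.2) (LF.μ (LF.η (LG.η PUnit.unit)) x)) = x
    have h0 : LF.η (LG.η PUnit.unit)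
        = LF.map (fun _ : PUnit => LG.η PUnit.unit) (LF.η PUnit.unit) :=
      (LF.η_natural _ _).symm
    have h1 : LF.μ (LF.map (fun _ : PUnit => LG.η PUnit.unit) (LF.η PUnit.unit)) x
        = LF.map (Prod.map (fun _ : PUnit => LG.η PUnit.unit) id)
            (LF.μ (LF.η PUnit.unit) x) := by
      rw [LF.μ_natural, LF.map_id]
    rw [h0, h1, ← LF.map_comp, ← LF.map_comp]
    have e : ((LG.map Prod.snd ∘ fun p => LG.μ p.1 p.2) ∘
        Prod.map (fun _ : PUnit => LG.η PUnit.unit) id : PUnit × G α → G α) = Prod.snd := by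
      funext p
      simp only [Function.comp, Prod.map, id]
      exact LG.μ_left_unit p.2
    rw [e]
    exact LF.μ_left_unit x
  μ_right_unit {α} x := by
    show LF.map (LG.map Prod.fst)
        (LF.map (fun p => LG.μ p.1 p.2) (LF.μ x (LF.η (LG.η PUnit.unit)))) = x
    have h0 : LF.η (LG.η PUnit.unit)
        = LF.map (fun _ : PUnit => LG.η PUnit.unit) (LF.η PUnit.unit) :=
      (LF.η_natural _ _).symm
    have h1 : LF.μ x (LF.map (fun _ : PUnit => LG.η PUnit.unit) (LF.η PUnit.unit))
        = LF.map (Prod.map id (fun _ : PUnit => LG.η PUnit.unit))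
            (LF.μ x (LF.η PUnit.unit)) := by
      rw [LF.μ_natural, LF.map_id]
    rw [h0, h1, ← LF.map_comp, ← LF.map_comp]
    have e : ((LG.map Prod.fst ∘ fun p => LG.μ p.1 p.2) ∘
        Prod.map id (fun _ : PUnit => LG.η PUnit.unit) : G α × PUnit → G α) = Prod.fst := by
      funext p
      simp only [Function.comp, Prod.map, id]
      exact LG.μ_right_unit p.1
    rw [e]
    exact LF.μ_right_unit x
  η_mult {α β} x y := by
    show LF.map (fun p => LG.μ p.1 p.2) (LF.μ (LF.η (LG.η x)) (LF.η (LG.η y)))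
      = LF.η (LG.η (x, y))
    rw [LF.η_mult, LF.η_natural, LG.η_mult]

/-- A morphism of applicative functors. -/
structure AppMorphism {F G : Type → Type} (LF : LaxApp F) (LG : LaxApp G) : Type 1 where
  app : ∀ {α : Type}, F α → G α
  natural : ∀ {α β : Type} (f : α → β) (x : F α), app (LF.map f x) = LG.map f (app x)
  unit : ∀ {α : Type} (x : α), app (LF.η x) = LG.η x
  mult : ∀ {α β : Type} (x : F α) (y : F β), app (LF.μ x y) = LG.μ (app x) (app y)

/-- A traversable functor: a family of distributive laws `δ`, natural in the applicative
functor with respect to applicative morphisms, satisfying unitarity and linearity. -/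
structure Traversal (T : Type → Type) (Tmap : ∀ {α β : Type}, (α → β) → T α → T β) :
    Type 1 where
  δ : ∀ {F : Type → Type} (LF : LaxApp F) {α : Type}, T (F α) → F (T α)
  naturality : ∀ {F G : Type → Type} {LF : LaxApp F} {LG : LaxApp G}
    (m : AppMorphism LF LG) {α : Type} (x : T (F α)),
    m.app (δ LF x) = δ LG (Tmap m.app x)
  unitarity : ∀ {α : Type} (x : T α), δ idApp (α := α) x = x
  linearity : ∀ {F G : Type → Type} (LF : LaxApp F) (LG : LaxApp G) {α : Type}
    (x : T (F (G α))),
    δ (compApp LF LG) (α := α) x = LF.map (δ LG) (δ LF x)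

/-- Functor laws for a map operation. -/
structure FunctorLaws (T : Type → Type) (Tmap : ∀ {α β : Type}, (α → β) → T α → T β) :
    Prop where
  map_id : ∀ {α : Type} (x : T α), Tmap id x = x
  map_comp : ∀ {α β γ : Type} (g : β → γ) (f : α → β) (x : T α),
    Tmap (g ∘ f) x = Tmap g (Tmap f x)

/-- A distributive law family natural in the applicative functor and satisfying
linearity (but with unitarity not assumed). -/
structure PreTraversal (T : Type → Type) (Tmap : ∀ {α β : Type}, (α → β) → T α → T β) :
    Type 1 where
  δ : ∀ {F : Type → Type} (LF : LaxApp F) {α : Type}, T (F α) → F (T α)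
  naturality : ∀ {F G : Type → Type} {LF : LaxApp F} {LG : LaxApp G}
    (m : AppMorphism LF LG) {α : Type} (x : T (F α)),
    m.app (δ LF x) = δ LG (Tmap m.app x)
  linearity : ∀ {F G : Type → Type} (LF : LaxApp F) (LG : LaxApp G) {α : Type}
    (x : T (F (G α))),
    δ (compApp LF LG) (α := α) x = LF.map (δ LG) (δ LF x)

def LaxApp.pureMorphism {F : Type → Type} (LF : LaxApp F) : AppMorphism idApp LF where
  app := LF.η
  natural f x := (LF.η_natural f x).symm
  unit _ := rfl
  mult x y := (LF.η_mult x y).symm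

theorem PreTraversal.δ_map_pure {T : Type → Type} {Tmap : ∀ {α β : Type}, (α → β) → T α → T β}
    (D : PreTraversal T Tmap) {F : Type → Type} (LF : LaxApp F) {α : Type} (x : T α) :
    D.δ LF (Tmap (LF.η (α := α)) x) = LF.η (D.δ idApp (α := α) x) :=
  (D.naturality LF.pureMorphism x).symm

/-- For a traversable functor `(T, δ)`, unitarity (`δ^Id = id`) is equivalent to the
purity law: `δ^F ∘ T η^F = η^F_T` for every applicative functor `F`. -/
theorem unitarity_iff_purity {T : Type → Type}
    {Tmap : ∀ {α β : Type}, (α → β) → T α → T β}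
    (hT : FunctorLaws T Tmap) (D : PreTraversal T Tmap) :
    (∀ (α : Type) (x : T α), D.δ idApp (α := α) x = x) ↔
    (∀ (F : Type → Type) (LF : LaxApp F) (α : Type) (x : T α),
      D.δ LF (Tmap (LF.η (α := α)) x) = LF.η x) := by
  constructor
  · intro unitarity F LF α x
    rw [D.δ_map_pure, unitarity]
  · intro purity α x
    have purity_id := purity _ idApp α x
    rwa [show Tmap idApp.η x = x from hT.map_id x] at purity_id
end

section
/- The extension of every finitary container is a traversable functor: for a finitary container (S, ar) with extension T X = Σ_{s∈S} X^{ar s}, there is a family of natural transformations δ^F : T(F X) → F(T X), natural in the applicative functor F, satisfying linearity and unitarity, given by sequencing the ar s many F-values left to right using the lax monoidal structure of F. -/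
/-- Iterated monoidal multiplication `μ^n : Fⁿ X → F (Xⁿ)` of an applicative functor,
defined by `μ⁰ = ν` and `μ^{k+1} = μ ∘ (id × μ^k)`. -/
def muN {F : Type → Type} (LF : LaxApp F) :
    ∀ (n : ℕ) {α : Type}, (Fin n → F α) → F (Fin n → α)
  | 0, _, _ => LF.map (fun _ i => i.elim0) (LF.η PUnit.unit)
  | n + 1, _, v => LF.map (fun p => Fin.cons p.1 p.2) (LF.μ (v 0) (muN LF n fun i => v i.succ))

/-! The traversal of `⟨s, v⟩` is `⟨s, -⟩ <$> μ^{ar s} v`. The three laws reduce to three facts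
about the iterated multiplication `μ^n`, each by induction on `n`: it commutes with applicative
morphisms, it is the identity for `Id`, and for a composite `F ∘ G` it factors as
`F μ_G^n ∘ μ_F^n`, the interchange being the definition of `μ` on `F ∘ G`. -/

theorem LaxApp.μ_map_right {F : Type → Type} (LF : LaxApp F) {α β γ : Type} (g : β → γ)
    (x : F α) (y : F β) : LF.μ x (LF.map g y) = LF.map (Prod.map id g) (LF.μ x y) := by
  rw [LF.μ_natural, LF.map_id]

theorem muN_map_app {F G : Type → Type} {LF : LaxApp F} {LG : LaxApp G}
    (m : AppMorphism LF LG) : ∀ (n : ℕ) {α : Type} (v : Fin n → F α),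
    m.app (muN LF n v) = muN LG n (fun i => m.app (v i))
  | 0, _, _ => by rw [muN, m.natural, m.unit, muN]
  | n + 1, _, v => by rw [muN, m.natural, m.mult, muN_map_app m n, muN]

theorem muN_idApp : ∀ (n : ℕ) {α : Type} (v : Fin n → α), muN idApp n v = v
  | 0, _, _ => funext fun i => i.elim0
  | n + 1, _, v => by
    change Fin.cons (v 0) (muN idApp n fun i => v i.succ) = v
    rw [muN_idApp n]
    exact Fin.cons_self_tail v

theorem muN_compApp {F G : Type → Type} (LF : LaxApp F) (LG : LaxApp G) :
    ∀ (n : ℕ) {α : Type} (v : Fin n → F (G α)),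
    muN (compApp LF LG) n v = LF.map (muN LG n) (muN LF n v)
  | 0, _, _ => by
    change LF.map (LG.map _) (LF.η (LG.η _)) = LF.map (muN LG 0) (LF.map _ (LF.η _))
    rw [LF.η_natural, LG.η_natural, ← LF.map_comp, LF.η_natural, Function.comp_apply, muN,
      LG.η_natural]
  | n + 1, _, v => by
    change LF.map (LG.map _) (LF.map _ (LF.μ (v 0) (muN (compApp LF LG) n _))) = _
    rw [muN_compApp LF LG n, LF.μ_map_right, muN, ← LF.map_comp, ← LF.map_comp,
      ← LF.map_comp]
    rfl

def containerTraversal (S : Type) (ar : S → ℕ) :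
    Traversal (fun α => Σ s : S, Fin (ar s) → α)
      (fun {α β} (f : α → β) p => ⟨p.1, fun i => f (p.2 i)⟩) where
  δ {_} LF {α} p := LF.map (fun v => (⟨p.1, v⟩ : Σ s : S, Fin (ar s) → α)) (muN LF (ar p.1) p.2)
  naturality {_ _ _ _} m {_} p := by rw [m.natural, muN_map_app]
  unitarity {_} p := by
    change (⟨p.1, muN idApp (ar p.1) p.2⟩ : Σ s : S, Fin (ar s) → _) = p
    rw [muN_idApp]
  linearity {_ _} LF LG {_} p := by
    change LF.map (LG.map _) (muN (compApp LF LG) _ _) = _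
    rw [muN_compApp, ← LF.map_comp, ← LF.map_comp]
    rfl

/-- The extension `T X = Σ_{s∈S} X^{ar s}` of every finitary container `(S, ar)` is
traversable, with the traversal sequencing the `ar s` many `F`-values left to right
using the lax monoidal structure of `F`. -/
theorem finitary_container_traversable (S : Type) (ar : S → ℕ) :
    ∃ D : Traversal (fun α => Σ s : S, Fin (ar s) → α)
        (fun {α β} (f : α → β) p => ⟨p.1, fun i => f (p.2 i)⟩),
      ∀ (F : Type → Type) (LF : LaxApp F) (α : Type) (p : Σ s : S, Fin (ar s) → F α),
        D.δ LF p
          = LF.map (fun v => (⟨p.1, v⟩ : Σ s : S, Fin (ar s) → α))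
              (muN LF (ar p.1) p.2) :=
  ⟨containerTraversal S ar, fun _ _ _ _ => rfl⟩
end
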